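/- If a probability measure μ on {0,1}^n has the conditional antipodal pairs property and its rank sequence has no internal zeros, then μ is ultra-log-concave, i.e., the sequence (μ(|η|=i)/C(n,i))_{i=0}^n is log-concave. -/

import Mathlib

/-!
Encode a pair `(η, η')` of points of the cube by `η` and the set `I` on which the two agree, so
that `η'` is the antipode of `η` in the subcube of coordinates outside `I`. Grouping the pairs
counted by `R (m - 1) * R (m + 1)` and by `R m ^ 2` (`R` the rank sequence) according to `I` and
to the values on `I`, each group becomes an antipodal sum of the measure conditioned on those
values, and CAPP compares the groups. This gives
`R (m - 1) * R (m + 1) ≤ ∑ d / (d + 2) * μ η * μ η'` over pairs of weight `m`, where `d` is the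
Hamming distance. The kernel `2 / (d + 2) = ∫₀¹ 2 s * s ^ d ds` is positive semidefinite, as
`s ^ d` is a tensor power of a positive semidefinite `2 × 2` matrix, and it has constant row sums
on a slice of the cube. So the right-hand side is at most its value at the uniform vector on the
slice, which a Vandermonde computation evaluates to
`R m ^ 2 * C(n, m - 1) * C(n, m + 1) / C(n, m) ^ 2`.
-/

open Finset

/-- Number of ones of `η ∈ {0,1}^n`. -/
def wt {n : ℕ} (η : Fin n → Bool) : ℕ := (univ.filter fun i => η i = true).card

/-- Total mass of the event that `η` agrees with `ξ` on the coordinates in `I`. -/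
noncomputable def condZ {n : ℕ} (μ : (Fin n → Bool) → ℝ) (I : Finset (Fin n))
    (ξ : Fin n → Bool) : ℝ :=
  ∑ η ∈ univ.filter (fun η : Fin n → Bool => ∀ i ∈ I, η i = ξ i), μ η

/-- Flip all coordinates outside `I` (antipode in the conditioned cube). -/
def flipOutside {n : ℕ} (I : Finset (Fin n)) (η : Fin n → Bool) : Fin n → Bool :=
  fun i => if i ∈ I then η i else !η i

/-- `γ_j` of the measure obtained from `μ` by conditioning on the values `ξ` of the
coordinates in `I`, regarded as a measure on the remaining `n - |I|` coordinates. -/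
noncomputable def condGamma {n : ℕ} (μ : (Fin n → Bool) → ℝ) (I : Finset (Fin n))
    (ξ : Fin n → Bool) (j : ℕ) : ℝ :=
  (((n - I.card).choose j : ℝ))⁻¹ *
    ∑ η ∈ univ.filter (fun η : Fin n → Bool =>
        (∀ i ∈ I, η i = ξ i) ∧ (univ.filter fun i => i ∉ I ∧ η i = true).card = j),
      (μ η / condZ μ I ξ) * (μ (flipOutside I η) / condZ μ I ξ)

/-- Rank sequence of `μ`. -/
noncomputable def rankSeq {n : ℕ} (μ : (Fin n → Bool) → ℝ) (i : ℕ) : ℝ :=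
  ∑ η ∈ univ.filter (fun η : Fin n → Bool => wt η = i), μ η

theorem sum_range_choose_succ_mul_choose (m k : ℕ) :
    ∑ j ∈ range (m + 1), (m + 1).choose (j + 1) * k.choose j = (m + 1 + k).choose m := by
  rw [Nat.add_choose_eq, Nat.sum_antidiagonal_eq_sum_range_succ
    (fun i j => (m + 1).choose i * k.choose j), ← sum_range_reflect]
  refine sum_congr rfl fun j hj => ?_
  have hj : j ≤ m := Nat.lt_succ_iff.mp (mem_range.mp hj)
  rw [Nat.add_sub_cancel, ← Nat.choose_symm (show j ≤ m + 1 by omega),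
    show m + 1 - j = m - j + 1 by omega]

theorem sum_choose_mul_choose_div_mul_choose {n m : ℕ} (hm : 1 ≤ m) (hmn : m + 1 ≤ n) :
    (∑ k ∈ range (m + 1), (m.choose k * (n - m).choose k : ℝ) / (k + 1)) * n.choose m =
      n.choose m ^ 2 - n.choose (m - 1) * n.choose (m + 1) := by
  have hsum : (∑ k ∈ range (m + 1), (m.choose k * (n - m).choose k : ℝ) / (k + 1)) * (m + 1) =
      (n + 1).choose m := by
    rw [← show m + 1 + (n - m) = n + 1 by omega, ← sum_range_choose_succ_mul_choose, sum_mul]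
    push_cast
    refine sum_congr rfl fun k _ => ?_
    have : ((m + 1) * m.choose k : ℝ) = (m + 1).choose (k + 1) * (k + 1) := by
      exact_mod_cast Nat.add_one_mul_choose_eq m k
    field_simp
    linear_combination ((n - m).choose k : ℝ) * this
  have hpascal : ((n + 1).choose m : ℝ) = n.choose (m - 1) + n.choose m := by
    obtain ⟨j, rfl⟩ : ∃ j, m = j + 1 := ⟨m - 1, by omega⟩
    rw [Nat.choose_succ_succ, Nat.add_sub_cancel]
    push_cast; ring
  have hsucc : (n.choose (m + 1) : ℝ) * (m + 1) = n.choose m * (n - m) := by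
    rw [← Nat.cast_sub (by omega : m ≤ n)]
    exact_mod_cast Nat.choose_succ_right_eq n m
  have hpred : (n.choose m : ℝ) * m = n.choose (m - 1) * (n - m + 1) := by
    have := Nat.choose_succ_right_eq n (m - 1)
    rw [Nat.sub_add_cancel hm, show n - (m - 1) = n - m + 1 by omega] at this
    rw [← Nat.cast_sub (by omega : m ≤ n)]
    exact_mod_cast this
  apply mul_left_cancel₀ (by positivity : (m : ℝ) + 1 ≠ 0)
  linear_combination (n.choose m : ℝ) * (hsum + hpascal - hpred) + (n.choose (m - 1) : ℝ) * hsucc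

section Powerset
variable {α : Type*} [Fintype α] [DecidableEq α]

theorem card_powersetCard_filter_card_sdiff (S : Finset α) (k : ℕ) :
    #{T ∈ powersetCard #S univ | #(S \ T) = k} =
      (#S).choose k * (Fintype.card α - #S).choose k := by
  rw [← card_compl, ← card_powersetCard, ← card_powersetCard, ← card_product]
  refine card_nbij' (fun T => (S \ T, T \ S)) (fun AB => S \ AB.1 ∪ AB.2) ?_ ?_ ?_ ?_
  · intro T hT
    simp only [coe_filter, mem_powersetCard, Set.mem_ofPred_eq, subset_univ, true_and] at hT
    simp only [coe_product, Set.mem_prod, mem_coe, mem_powersetCard, sdiff_subset, true_and,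
      hT.2, subset_compl_iff_disjoint_right, sdiff_disjoint]
    rw [← card_sdiff_comm hT.1.symm, hT.2]
  · rintro ⟨A, B⟩ hAB
    simp only [coe_product, Set.mem_prod, mem_coe, mem_powersetCard,
      subset_compl_iff_disjoint_right] at hAB
    obtain ⟨⟨hAS, hA⟩, hBS, hB⟩ := hAB
    have hSA : S \ (S \ A ∪ B) = A := by
      ext x
      have := @hAS x
      have := fun h : x ∈ B => disjoint_left.mp hBS h
      simp only [mem_sdiff, mem_union]
      tauto
    simp only [coe_filter, mem_powersetCard, subset_univ, true_and, Set.mem_ofPred_eq, hSA, hA,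
      and_true]
    rw [card_union_of_disjoint (disjoint_of_subset_left sdiff_subset hBS.symm),
      card_sdiff_of_subset hAS]
    have := card_le_card hAS
    omega
  · intro T _
    ext x
    simp only [mem_sdiff, mem_union]
    tauto
  · rintro ⟨A, B⟩ hAB
    simp only [coe_product, Set.mem_prod, mem_coe, mem_powersetCard,
      subset_compl_iff_disjoint_right] at hAB
    obtain ⟨⟨hAS, -⟩, hBS, -⟩ := hAB
    ext x <;> have := @hAS x <;> have := fun h : x ∈ B => disjoint_left.mp hBS h <;>
      simp only [mem_sdiff, mem_union] <;> tauto

theorem sum_powersetCard_card_sdiff {M : Type*} [AddCommMonoid M] (S : Finset α) (g : ℕ → M) :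
    ∑ T ∈ powersetCard #S univ, g #(S \ T) =
      ∑ k ∈ range (#S + 1), ((#S).choose k * (Fintype.card α - #S).choose k) • g k := by
  rw [← sum_fiberwise_of_maps_to (g := fun T => #(S \ T)) (t := range (#S + 1))
    fun T _ => mem_range_succ_iff.mpr (card_le_card sdiff_subset)]
  refine sum_congr rfl fun k _ => ?_
  rw [sum_congr rfl fun T hT => by rw [(mem_filter.mp hT).2], sum_const,
    card_powersetCard_filter_card_sdiff]

end Powerset

theorem sq_sum_mul_le_card_mul_sum_sum {α : Type*} (S : Finset α) (K : α → α → ℝ)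
    (hK : ∀ z : α → ℝ, 0 ≤ ∑ x ∈ S, ∑ y ∈ S, z x * z y * K x y)
    (hsymm : ∀ x y, K x y = K y x) {ρ : ℝ} (hrow : ∀ x ∈ S, ∑ y ∈ S, K x y = ρ) (f : α → ℝ) :
    (∑ x ∈ S, f x) ^ 2 * ρ ≤ #S * ∑ x ∈ S, ∑ y ∈ S, f x * f y * K x y := by
  rcases S.eq_empty_or_nonempty with rfl | hS
  · simp
  set R := ∑ x ∈ S, f x
  set N : ℝ := (#S : ℝ)
  have h₁ : ∑ x ∈ S, ∑ y ∈ S, f x * K x y = R * ρ := by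
    rw [sum_mul]
    exact sum_congr rfl fun x hx => by rw [← mul_sum, hrow x hx]
  have h₂ : ∑ x ∈ S, ∑ y ∈ S, f y * K x y = R * ρ := by
    rw [sum_comm]
    simp only [hsymm _ _]
    exact h₁
  have h₃ : ∑ x ∈ S, ∑ y ∈ S, K x y = N * ρ := by
    rw [sum_congr rfl hrow, sum_const, nsmul_eq_mul]
  have hcentred := hK fun x => N * f x - R
  have hexpand : ∑ x ∈ S, ∑ y ∈ S, (N * f x - R) * (N * f y - R) * K x y =
      N ^ 2 * ∑ x ∈ S, ∑ y ∈ S, f x * f y * K x y - N * R * ∑ x ∈ S, ∑ y ∈ S, f x * K x y -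
        N * R * ∑ x ∈ S, ∑ y ∈ S, f y * K x y + R ^ 2 * ∑ x ∈ S, ∑ y ∈ S, K x y := by
    simp only [mul_sum, ← sum_sub_distrib, ← sum_add_distrib]
    exact sum_congr rfl fun x _ => sum_congr rfl fun y _ => by ring
  rw [hexpand, h₁, h₂, h₃] at hcentred
  have hN : 0 < N := by simp [N, hS.card_pos]
  nlinarith

section Kernel
variable {ι : Type*} [Fintype ι]

def boolSign (b : Bool) : ℝ := if b then -1 else 1

/-- Walsh expansion: for `0 ≤ s ≤ 1` the kernel `s ^ hammingDist` is a nonnegative combination of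
the rank-one kernels `χ_t x * χ_t y`. -/
theorem pow_hammingDist_eq_sum [DecidableEq ι] (s : ℝ) (x y : ι → Bool) :
    s ^ hammingDist x y = ∑ t : Finset ι, ((1 - s) / 2) ^ #t * ((1 + s) / 2) ^ #tᶜ *
      ((∏ i ∈ t, boolSign (x i)) * ∏ i ∈ t, boolSign (y i)) := by
  have hfactor (i : ι) : (if x i ≠ y i then s else 1) =
      (1 - s) / 2 * (boolSign (x i) * boolSign (y i)) + (1 + s) / 2 := by
    cases x i <;> cases y i <;> simp [boolSign] <;> ring
  have hpow : s ^ hammingDist x y = ∏ i, (if x i ≠ y i then s else 1) := by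
    rw [prod_ite, prod_const_one, mul_one, prod_const, hammingDist]
  rw [hpow, Fintype.prod_congr _ _ hfactor, prod_add, ← powerset_univ]
  refine sum_congr rfl fun t _ => ?_
  rw [prod_mul_distrib, prod_mul_distrib, prod_const, prod_const, compl_eq_univ_sdiff]
  ring

theorem sum_sum_mul_pow_hammingDist_nonneg [DecidableEq ι] (S : Finset (ι → Bool))
    (z : (ι → Bool) → ℝ) {s : ℝ} (hs₀ : 0 ≤ s) (hs₁ : s ≤ 1) :
    0 ≤ ∑ x ∈ S, ∑ y ∈ S, z x * z y * s ^ hammingDist x y := by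
  have hsq (t : Finset ι) : ∑ x ∈ S, ∑ y ∈ S, z x * z y * (((1 - s) / 2) ^ #t *
      ((1 + s) / 2) ^ #tᶜ * ((∏ i ∈ t, boolSign (x i)) * ∏ i ∈ t, boolSign (y i))) =
      ((1 - s) / 2) ^ #t * ((1 + s) / 2) ^ #tᶜ *
        (∑ x ∈ S, z x * ∏ i ∈ t, boolSign (x i)) ^ 2 := by
    rw [sq, sum_mul_sum, mul_sum]
    exact sum_congr rfl fun x _ => by
      rw [mul_sum]
      exact sum_congr rfl fun y _ => by ring
  simp only [pow_hammingDist_eq_sum, mul_sum]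
  rw [sum_congr rfl fun x _ => sum_comm, sum_comm]
  refine sum_nonneg fun t _ => ?_
  rw [hsq]
  have : 0 ≤ 1 - s := by linarith
  positivity

theorem div_hammingDist_add_two_eq_integral (x y : ι → Bool) :
    (2 : ℝ) / (hammingDist x y + 2) = ∫ s in (0 : ℝ)..1, 2 * s * s ^ hammingDist x y := by
  simp_rw [mul_assoc, ← pow_succ']
  rw [intervalIntegral.integral_const_mul, integral_pow]
  push_cast
  ring

theorem sum_sum_mul_div_hammingDist_add_two_nonneg [DecidableEq ι] (S : Finset (ι → Bool))
    (z : (ι → Bool) → ℝ) :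
    0 ≤ ∑ x ∈ S, ∑ y ∈ S, z x * z y * (2 / (hammingDist x y + 2)) := by
  have hint (f : ℝ → ℝ) (hf : Continuous f) : IntervalIntegrable f MeasureTheory.volume 0 1 :=
    hf.intervalIntegrable _ _
  calc 0 ≤ ∫ s in (0 : ℝ)..1, 2 * s * ∑ x ∈ S, ∑ y ∈ S, z x * z y * s ^ hammingDist x y :=
        intervalIntegral.integral_nonneg zero_le_one fun s hs =>
          mul_nonneg (by linarith [hs.1]) (sum_sum_mul_pow_hammingDist_nonneg S z hs.1 hs.2)
    _ = ∑ x ∈ S, ∑ y ∈ S, z x * z y * (2 / (hammingDist x y + 2)) := by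
      simp_rw [div_hammingDist_add_two_eq_integral, ← intervalIntegral.integral_const_mul,
        mul_sum]
      rw [intervalIntegral.integral_finsetSum fun x _ => hint _ (by fun_prop)]
      refine sum_congr rfl fun x _ => ?_
      rw [intervalIntegral.integral_finsetSum fun y _ => hint _ (by fun_prop)]
      exact sum_congr rfl fun y _ => intervalIntegral.integral_congr fun s _ => by ring

end Kernel

section Cube
variable {n : ℕ}

def inOnes (I : Finset (Fin n)) (η : Fin n → Bool) : ℕ := #{i | i ∈ I ∧ η i = true}

def outOnes (I : Finset (Fin n)) (η : Fin n → Bool) : ℕ := #{i | i ∉ I ∧ η i = true}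

theorem wt_eq_inOnes_add_outOnes (I : Finset (Fin n)) (η : Fin n → Bool) :
    wt η = inOnes I η + outOnes I η := by
  rw [wt, inOnes, outOnes,
    ← card_union_of_disjoint (disjoint_filter.mpr fun _ _ h h' => h'.1 h.1)]
  congr 1
  ext i
  simp only [mem_filter, mem_univ, true_and, mem_union]
  tauto

theorem inOnes_congr {I : Finset (Fin n)} {η ξ : Fin n → Bool} (h : ∀ i ∈ I, η i = ξ i) :
    inOnes I η = inOnes I ξ := by
  unfold inOnes
  congr 1
  ext i
  simp only [mem_filter, mem_univ, true_and]
  exact and_congr_right fun hi => by rw [h i hi]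

theorem inOnes_flipOutside (I : Finset (Fin n)) (η : Fin n → Bool) :
    inOnes I (flipOutside I η) = inOnes I η :=
  inOnes_congr fun _ hi => if_pos hi

theorem outOnes_add_outOnes_flipOutside (I : Finset (Fin n)) (η : Fin n → Bool) :
    outOnes I η + outOnes I (flipOutside I η) = n - #I := by
  rw [outOnes, outOnes, ← card_union_of_disjoint, show n - #I = #Iᶜ by simp [card_compl]]
  · congr 1
    ext i
    by_cases hi : i ∈ I <;> simp [flipOutside, hi]
  · exact disjoint_filter.mpr fun i _ h h' => by simp [flipOutside, h.1, h.2] at h'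

theorem wt_flipOutside_add_outOnes (I : Finset (Fin n)) (η : Fin n → Bool) :
    wt (flipOutside I η) + outOnes I η = inOnes I η + (n - #I) := by
  have := outOnes_add_outOnes_flipOutside I η
  rw [wt_eq_inOnes_add_outOnes I, inOnes_flipOutside]
  omega

theorem hammingDist_flipOutside (I : Finset (Fin n)) (η : Fin n → Bool) :
    hammingDist η (flipOutside I η) = n - #I := by
  rw [hammingDist, show n - #I = #Iᶜ by simp [card_compl]]
  congr 1
  ext i
  by_cases hi : i ∈ I <;> simp [flipOutside, hi]

def agreeSet (η η' : Fin n → Bool) : Finset (Fin n) := {i | η i = η' i}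

theorem agreeSet_flipOutside (I : Finset (Fin n)) (η : Fin n → Bool) :
    agreeSet η (flipOutside I η) = I := by
  ext i
  by_cases hi : i ∈ I <;> simp [agreeSet, flipOutside, hi]

theorem flipOutside_agreeSet (η η' : Fin n → Bool) : flipOutside (agreeSet η η') η = η' := by
  funext i
  simp only [flipOutside, agreeSet, mem_filter, mem_univ, true_and]
  split_ifs with h
  · exact h
  · revert h
    cases η i <;> cases η' i <;> simp

def flipOutsideEquiv : Finset (Fin n) × (Fin n → Bool) ≃ (Fin n → Bool) × (Fin n → Bool) where
  toFun p := (p.2, flipOutside p.1 p.2)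
  invFun q := (agreeSet q.1 q.2, q.1)
  left_inv p := by simp [agreeSet_flipOutside]
  right_inv q := by simp [flipOutside_agreeSet]

theorem sum_sum_eq_sum_sum_flipOutside {M : Type*} [AddCommMonoid M]
    (f : (Fin n → Bool) → (Fin n → Bool) → M) :
    ∑ η, ∑ η', f η η' = ∑ I, ∑ η, f η (flipOutside I η) := by
  simp only [← Fintype.sum_prod_type']
  exact (Fintype.sum_equiv flipOutsideEquiv _ _ fun _ => rfl).symm

def mask (I : Finset (Fin n)) (η : Fin n → Bool) : Fin n → Bool :=
  fun i => if i ∈ I then η i else false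

theorem sum_eq_sum_mask_sum {M : Type*} [AddCommMonoid M] (I : Finset (Fin n))
    (g : (Fin n → Bool) → M) :
    ∑ η, g η = ∑ ξ with mask I ξ = ξ, ∑ η with ∀ i ∈ I, η i = ξ i, g η := by
  rw [sum_comm' (t' := univ) (s' := fun η => {mask I η})]
  · simp
  intro ξ η
  simp only [mem_filter, mem_univ, true_and, mem_singleton, and_true]
  constructor
  · rintro ⟨hξ, hη⟩
    rw [← hξ]
    funext i
    by_cases hi : i ∈ I <;> simp [mask, hi, hη]
  · rintro rfl
    refine ⟨?_, fun i hi => by simp [mask, hi]⟩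
    funext i
    by_cases hi : i ∈ I <;> simp [mask, hi]

def cubeSlice (n m : ℕ) : Finset (Fin n → Bool) := {η | wt η = m}

def ones (η : Fin n → Bool) : Finset (Fin n) := {i | η i = true}

theorem sum_cubeSlice_eq_sum_powersetCard {M : Type*} [AddCommMonoid M] (m : ℕ)
    (g : Finset (Fin n) → M) :
    ∑ η ∈ cubeSlice n m, g (ones η) = ∑ T ∈ powersetCard m univ, g T := by
  refine sum_nbij' ones (fun T i => decide (i ∈ T)) ?_ ?_ ?_ ?_ fun _ _ => rfl
  · intro η h
    exact mem_powersetCard.mpr ⟨subset_univ _, (mem_filter.mp h).2⟩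
  · intro T h
    exact mem_filter.mpr ⟨mem_univ _, by simpa [wt] using (mem_powersetCard.mp h).2⟩
  · intro η _
    funext i
    simp [ones]
  · intro T _
    ext i
    simp [ones]

theorem card_cubeSlice (m : ℕ) : #(cubeSlice n m) = n.choose m := by
  simpa using sum_cubeSlice_eq_sum_powersetCard (n := n) m fun _ => (1 : ℕ)

theorem hammingDist_eq_two_mul_card_sdiff {η η' : Fin n → Bool} (h : wt η = wt η') :
    hammingDist η η' = 2 * #(ones η \ ones η') := by
  rw [two_mul]
  nth_rw 2 [card_sdiff_comm (s := ones η) (t := ones η') h]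
  rw [← card_union_of_disjoint disjoint_sdiff_sdiff, hammingDist]
  congr 1
  ext i
  simp only [mem_filter, mem_univ, true_and, mem_union, mem_sdiff, ones]
  cases η i <;> cases η' i <;> simp

theorem sum_cubeSlice_hammingDist {m : ℕ} {η : Fin n → Bool} (hη : wt η = m) (g : ℕ → ℝ) :
    ∑ η' ∈ cubeSlice n m, g (hammingDist η η') =
      ∑ k ∈ range (m + 1), (m.choose k * (n - m).choose k : ℝ) * g (2 * k) := by
  have hS : #(ones η) = m := hη
  rw [sum_congr rfl fun η' h' => by
      rw [hammingDist_eq_two_mul_card_sdiff (hη.trans (mem_filter.mp h').2.symm)],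
    sum_cubeSlice_eq_sum_powersetCard m fun T => g (2 * #(ones η \ T)), ← hS,
    sum_powersetCard_card_sdiff (ones η) fun k => g (2 * k), Fintype.card_fin]
  simp only [nsmul_eq_mul, Nat.cast_mul]

theorem sq_choose_mul_sum_sum_cubeSlice_le {m : ℕ} (hm : 1 ≤ m) (hmn : m + 1 ≤ n)
    (f : (Fin n → Bool) → ℝ) :
    (n.choose m : ℝ) ^ 2 * ∑ η ∈ cubeSlice n m, ∑ η' ∈ cubeSlice n m,
        (hammingDist η η' : ℝ) / (hammingDist η η' + 2) * (f η * f η') ≤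
      n.choose (m - 1) * n.choose (m + 1) * (∑ η ∈ cubeSlice n m, f η) ^ 2 := by
  have hrow : ∀ η ∈ cubeSlice n m, ∑ η' ∈ cubeSlice n m, (2 : ℝ) / (hammingDist η η' + 2) =
      ∑ k ∈ range (m + 1), (m.choose k * (n - m).choose k : ℝ) / (k + 1) := by
    intro η hη
    rw [sum_cubeSlice_hammingDist (mem_filter.mp hη).2 fun d => 2 / ((d : ℝ) + 2)]
    refine sum_congr rfl fun k _ => ?_
    push_cast
    field_simp
  have hquad := sq_sum_mul_le_card_mul_sum_sum _ _
    (sum_sum_mul_div_hammingDist_add_two_nonneg (cubeSlice n m))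
    (fun x y => by rw [hammingDist_comm]) hrow f
  rw [card_cubeSlice] at hquad
  have hweight : ∑ η ∈ cubeSlice n m, ∑ η' ∈ cubeSlice n m,
        (hammingDist η η' : ℝ) / (hammingDist η η' + 2) * (f η * f η') =
      (∑ η ∈ cubeSlice n m, f η) ^ 2 - ∑ η ∈ cubeSlice n m, ∑ η' ∈ cubeSlice n m,
        f η * f η' * (2 / (hammingDist η η' + 2)) := by
    rw [sq, sum_mul_sum, ← sum_sub_distrib]
    refine sum_congr rfl fun η _ => ?_
    rw [← sum_sub_distrib]
    refine sum_congr rfl fun η' _ => ?_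
    field_simp
    ring
  rw [hweight]
  nlinarith [mul_le_mul_of_nonneg_left hquad (Nat.cast_nonneg (n.choose m) : (0 : ℝ) ≤ _),
    sum_choose_mul_choose_div_mul_choose hm hmn]

end Cube

section Antipodal
variable {n : ℕ}

def HasCondAntipodalPairs (μ : (Fin n → Bool) → ℝ) : Prop :=
  ∀ k, 1 ≤ k → 2 * k ≤ n →
    ∀ I : Finset (Fin n), I.card = n - 2 * k → ∀ ξ : Fin n → Bool,
      0 < condZ μ I ξ → condGamma μ I ξ (k - 1) ≤ condGamma μ I ξ k

noncomputable def antipodalSum (μ : (Fin n → Bool) → ℝ) (I : Finset (Fin n))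
    (ξ : Fin n → Bool) (j : ℕ) : ℝ :=
  ∑ η with (∀ i ∈ I, η i = ξ i) ∧ outOnes I η = j, μ η * μ (flipOutside I η)

theorem condGamma_eq (μ : (Fin n → Bool) → ℝ) (I : Finset (Fin n)) (ξ : Fin n → Bool) (j : ℕ) :
    condGamma μ I ξ j = antipodalSum μ I ξ j / ((n - #I).choose j * condZ μ I ξ ^ 2) := by
  simp only [condGamma, antipodalSum, outOnes, sum_div, mul_sum]
  refine sum_congr rfl fun η _ => ?_
  field_simp

theorem antipodalSum_eq_zero_of_condZ_eq_zero {μ : (Fin n → Bool) → ℝ} (hpos : ∀ η, 0 ≤ μ η)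
    {I : Finset (Fin n)} {ξ : Fin n → Bool} (hZ : condZ μ I ξ = 0) (j : ℕ) :
    antipodalSum μ I ξ j = 0 := by
  have hzero : ∀ η, (∀ i ∈ I, η i = ξ i) → μ η = 0 := fun η hη =>
    (sum_eq_zero_iff_of_nonneg fun η _ => hpos η).mp hZ η (by simpa using hη)
  exact sum_eq_zero fun η hη => by rw [hzero η (mem_filter.mp hη).2.1, zero_mul]

theorem HasCondAntipodalPairs.antipodalSum_le {μ : (Fin n → Bool) → ℝ}
    (hCAPP : HasCondAntipodalPairs μ) (hpos : ∀ η, 0 ≤ μ η) {k : ℕ} (hk : 1 ≤ k)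
    {I : Finset (Fin n)} (hI : #I + 2 * k = n) (ξ : Fin n → Bool) :
    (k + 1) * antipodalSum μ I ξ (k - 1) ≤ k * antipodalSum μ I ξ k := by
  rcases (sum_nonneg fun η _ => hpos η : 0 ≤ condZ μ I ξ).eq_or_lt with hZ | hZ
  · simp [antipodalSum_eq_zero_of_condZ_eq_zero hpos hZ.symm]
  set Z := condZ μ I ξ
  have hC (j : ℕ) (hj : j ≤ 2 * k) : (0 : ℝ) < (2 * k).choose j * Z ^ 2 := by
    have := Nat.choose_pos hj
    positivity
  have h := hCAPP k hk (by omega) I (by omega) ξ hZ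
  rw [condGamma_eq, condGamma_eq, show n - #I = 2 * k by omega,
    div_le_div_iff₀ (hC _ (by omega)) (hC _ (by omega))] at h
  have hchoose : ((2 * k).choose k : ℝ) * k = (2 * k).choose (k - 1) * (k + 1) := by
    have := Nat.choose_succ_right_eq (2 * k) (k - 1)
    rw [Nat.sub_add_cancel hk, show 2 * k - (k - 1) = k + 1 by omega] at this
    exact_mod_cast this
  refine le_of_mul_le_mul_right ?_ (hC (k - 1) (by omega))
  calc (k + 1) * antipodalSum μ I ξ (k - 1) * ((2 * k).choose (k - 1) * Z ^ 2)
      = k * (antipodalSum μ I ξ (k - 1) * ((2 * k).choose k * Z ^ 2)) := by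
        linear_combination (antipodalSum μ I ξ (k - 1) * Z ^ 2) * hchoose.symm
    _ ≤ k * (antipodalSum μ I ξ k * ((2 * k).choose (k - 1) * Z ^ 2)) := by gcongr
    _ = k * antipodalSum μ I ξ k * ((2 * k).choose (k - 1) * Z ^ 2) := by ring

theorem HasCondAntipodalPairs.sum_flipOutside_pred_succ_le {μ : (Fin n → Bool) → ℝ}
    (hCAPP : HasCondAntipodalPairs μ) (hpos : ∀ η, 0 ≤ μ η) {m : ℕ} (hm : 1 ≤ m)
    (I : Finset (Fin n)) (ξ : Fin n → Bool) :
    ∑ η with (∀ i ∈ I, η i = ξ i) ∧ wt η = m - 1 ∧ wt (flipOutside I η) = m + 1,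
        μ η * μ (flipOutside I η) ≤
      ∑ η with (∀ i ∈ I, η i = ξ i) ∧ wt η = m ∧ wt (flipOutside I η) = m,
        (hammingDist η (flipOutside I η) : ℝ) / (hammingDist η (flipOutside I η) + 2) *
          (μ η * μ (flipOutside I η)) := by
  have hwt (η : Fin n → Bool) (hη : ∀ i ∈ I, η i = ξ i) :
      wt η = inOnes I ξ + outOnes I η ∧
        wt (flipOutside I η) + outOnes I η = inOnes I ξ + (n - #I) := by
    rw [wt_eq_inOnes_add_outOnes I, wt_flipOutside_add_outOnes, inOnes_congr hη]
    exact ⟨rfl, rfl⟩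
  by_cases hne : ∃ η, (∀ i ∈ I, η i = ξ i) ∧ wt η = m - 1 ∧ wt (flipOutside I η) = m + 1
  swap
  · rw [sum_eq_zero fun η hη => absurd ⟨η, (mem_filter.mp hη).2⟩ hne]
    exact sum_nonneg fun η _ => by
      have := hpos η
      have := hpos (flipOutside I η)
      positivity
  -- Some `η` of weight `m - 1` has an antipode of weight `m + 1`: this forces `n - #I = 2 * k`,
  -- and both sides are antipodal sums of the measure conditioned on `ξ`, at levels `k - 1`, `k`.
  obtain ⟨η₀, hη₀, h₁, h₂⟩ := hne
  obtain ⟨h₃, h₄⟩ := hwt η₀ hη₀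
  set k := outOnes I η₀ + 1
  have hI : #I + 2 * k = n := by
    have := card_le_univ I
    simp only [Fintype.card_fin] at this
    omega
  have hL : ({η | (∀ i ∈ I, η i = ξ i) ∧ wt η = m - 1 ∧ wt (flipOutside I η) = m + 1} :
      Finset (Fin n → Bool)) =
      ({η | (∀ i ∈ I, η i = ξ i) ∧ outOnes I η = k - 1} : Finset (Fin n → Bool)) :=
    filter_congr fun η _ => ⟨fun h => ⟨h.1, by have := hwt η h.1; omega⟩,
      fun h => ⟨h.1, by have := hwt η h.1; omega⟩⟩
  have hR : ({η | (∀ i ∈ I, η i = ξ i) ∧ wt η = m ∧ wt (flipOutside I η) = m} :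
      Finset (Fin n → Bool)) =
      ({η | (∀ i ∈ I, η i = ξ i) ∧ outOnes I η = k} : Finset (Fin n → Bool)) :=
    filter_congr fun η _ => ⟨fun h => ⟨h.1, by have := hwt η h.1; omega⟩,
      fun h => ⟨h.1, by have := hwt η h.1; omega⟩⟩
  rw [hL, hR]
  simp only [hammingDist_flipOutside, show n - #I = 2 * k by omega, ← mul_sum]
  have hk : ((2 * k : ℕ) : ℝ) / ((2 * k : ℕ) + 2) = k / (k + 1) := by
    push_cast
    field_simp
  rw [hk, div_mul_eq_mul_div, le_div_iff₀ (by positivity)]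
  have := hCAPP.antipodalSum_le hpos (by omega : 1 ≤ k) hI ξ
  rw [antipodalSum, antipodalSum] at this
  linarith

theorem HasCondAntipodalPairs.rankSeq_pred_mul_rankSeq_succ_le {μ : (Fin n → Bool) → ℝ}
    (hCAPP : HasCondAntipodalPairs μ) (hpos : ∀ η, 0 ≤ μ η) {m : ℕ} (hm : 1 ≤ m) :
    rankSeq μ (m - 1) * rankSeq μ (m + 1) ≤
      ∑ η ∈ cubeSlice n m, ∑ η' ∈ cubeSlice n m,
        (hammingDist η η' : ℝ) / (hammingDist η η' + 2) * (μ η * μ η') := by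
  have hL : rankSeq μ (m - 1) * rankSeq μ (m + 1) =
      ∑ η, ∑ η', if wt η = m - 1 ∧ wt η' = m + 1 then μ η * μ η' else 0 := by
    simp only [rankSeq, sum_filter, sum_mul_sum, ite_zero_mul_ite_zero]
  have hR : ∑ η ∈ cubeSlice n m, ∑ η' ∈ cubeSlice n m,
        (hammingDist η η' : ℝ) / (hammingDist η η' + 2) * (μ η * μ η') =
      ∑ η, ∑ η', if wt η = m ∧ wt η' = m then
        (hammingDist η η' : ℝ) / (hammingDist η η' + 2) * (μ η * μ η') else 0 := by
    simp only [cubeSlice, sum_filter, ite_and, sum_ite_irrel, sum_const_zero]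
  rw [hL, hR, sum_sum_eq_sum_sum_flipOutside, sum_sum_eq_sum_sum_flipOutside]
  refine sum_le_sum fun I _ => ?_
  rw [sum_eq_sum_mask_sum I, sum_eq_sum_mask_sum I]
  refine sum_le_sum fun ξ _ => ?_
  rw [← sum_filter, ← sum_filter, filter_filter, filter_filter]
  exact hCAPP.sum_flipOutside_pred_succ_le hpos hm I ξ

end Antipodal

theorem capp_ulc_general {n : ℕ} (μ : (Fin n → Bool) → ℝ)
    (hpos : ∀ η, 0 ≤ μ η)
    (hCAPP : ∀ k, 1 ≤ k → 2 * k ≤ n →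
      ∀ I : Finset (Fin n), I.card = n - 2 * k → ∀ ξ : Fin n → Bool,
        0 < condZ μ I ξ → condGamma μ I ξ (k - 1) ≤ condGamma μ I ξ k) :
    ∀ i, 1 ≤ i → i ≤ n - 1 →
      (rankSeq μ (i - 1) / (n.choose (i - 1) : ℝ)) *
          (rankSeq μ (i + 1) / (n.choose (i + 1) : ℝ)) ≤
        (rankSeq μ i / (n.choose i : ℝ)) ^ 2 := by
  intro i hi hin
  have hchoose (j : ℕ) (hj : j ≤ n) : (0 : ℝ) < n.choose j := by
    exact_mod_cast Nat.choose_pos hj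
  rw [div_mul_div_comm, div_pow,
    div_le_div_iff₀ (mul_pos (hchoose _ (by omega)) (hchoose _ (by omega)))
      (pow_pos (hchoose _ (by omega)) 2)]
  calc rankSeq μ (i - 1) * rankSeq μ (i + 1) * (n.choose i : ℝ) ^ 2
      ≤ (n.choose i : ℝ) ^ 2 * ∑ η ∈ cubeSlice n i, ∑ η' ∈ cubeSlice n i,
          (hammingDist η η' : ℝ) / (hammingDist η η' + 2) * (μ η * μ η') := by
        rw [mul_comm]
        exact mul_le_mul_of_nonneg_left
          (HasCondAntipodalPairs.rankSeq_pred_mul_rankSeq_succ_le hCAPP hpos hi) (by positivity)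
    _ ≤ n.choose (i - 1) * n.choose (i + 1) * rankSeq μ i ^ 2 :=
        sq_choose_mul_sum_sum_cubeSlice_le hi (by omega) μ
    _ = rankSeq μ i ^ 2 * (n.choose (i - 1) * n.choose (i + 1)) := by ring

theorem capp_ulc {n : ℕ} (μ : (Fin n → Bool) → ℝ)
    (hpos : ∀ η, 0 ≤ μ η) (hsum : ∑ η : Fin n → Bool, μ η = 1)
    (hCAPP : ∀ k, 1 ≤ k → 2 * k ≤ n →
      ∀ I : Finset (Fin n), I.card = n - 2 * k → ∀ ξ : Fin n → Bool,
        0 < condZ μ I ξ → condGamma μ I ξ (k - 1) ≤ condGamma μ I ξ k)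
    (hnoz : ∀ i j m, i ≤ j → j ≤ m → m ≤ n →
      rankSeq μ i ≠ 0 → rankSeq μ m ≠ 0 → rankSeq μ j ≠ 0) :
    ∀ i, 1 ≤ i → i ≤ n - 1 →
      (rankSeq μ (i - 1) / (n.choose (i - 1) : ℝ)) *
          (rankSeq μ (i + 1) / (n.choose (i + 1) : ℝ)) ≤
        (rankSeq μ i / (n.choose i : ℝ)) ^ 2 :=
  capp_ulc_general μ hpos hCAPP
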